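/- Let α_1, α_2, α_3 be the three distinct complex roots of T^3 - T - 2. For every positive integer n, the three numbers α_1^n + 1, α_2^n + 1, α_3^n + 1 are pairwise distinct. -/

import Mathlib

/-!
Reducing `Tⁿ` modulo `T³ - T - 2` gives integers `p, q, s` with `αⁿ = p + q α + s α²` for every
root `α`. If `xⁿ = yⁿ` for distinct roots `x, y`, dividing the difference by `x - y` gives
`q = s z` for the third root `z = -(x + y)`. If `s ≠ 0` then `z = q / s` would be a rational root,
and there is none. If `s = 0` then `xⁿ = yⁿ = zⁿ = p`, so the three roots have the same modulus;
since they sum to `0`, so do their conjugates `|α|² / α`, i.e. `1/x + 1/y + 1/z = 0`. But by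
Vieta this sum is `(xy + yz + zx) / xyz = -1/2`.
-/

open Polynomial

lemma Int.cube_ne_add_two (m : ℤ) : m ^ 3 ≠ m + 2 := by
  -- `m³ ≡ m (mod 3)`
  intro h
  have h3 : (m : ZMod 3) ^ 3 = m + 2 := by exact_mod_cast congrArg (Int.cast : ℤ → ZMod 3) h
  generalize (m : ZMod 3) = a at h3
  revert a
  decide

lemma Rat.cube_ne_add_two (r : ℚ) : r ^ 3 ≠ r + 2 := by
  intro h
  have hint : IsIntegral ℤ r :=
    ⟨X ^ 3 - X - 2, by monicity!, by simp [eval₂_sub, h]⟩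
  obtain ⟨m, rfl⟩ := IsIntegrallyClosed.isIntegral_iff.mp hint
  rw [algebraMap_int_eq, eq_intCast] at h
  exact Int.cube_ne_add_two m (by exact_mod_cast h)

lemma exists_pow_eq_of_cube_eq_add_two (R : Type*) [CommRing R] (n : ℕ) :
    ∃ p q s : ℤ, ∀ x : R, x ^ 3 = x + 2 → x ^ n = p + q * x + s * x ^ 2 := by
  induction n with
  | zero => exact ⟨1, 0, 0, fun x _ => by simp⟩
  | succ n ih =>
    obtain ⟨p, q, s, h⟩ := ih
    refine ⟨2 * s, p + s, q, fun x hx => ?_⟩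
    rw [pow_succ, h x hx]
    push_cast
    linear_combination (s : R) * hx

lemma Complex.inv_add_inv_add_inv_eq_zero_of_norm_eq {x y z : ℂ} (hxy : ‖x‖ = ‖y‖)
    (hxz : ‖x‖ = ‖z‖) (hsum : x + y + z = 0) : x⁻¹ + y⁻¹ + z⁻¹ = 0 := by
  have hy : normSq y = normSq x := by rw [← Complex.sq_norm, ← Complex.sq_norm, hxy]
  have hz : normSq z = normSq x := by rw [← Complex.sq_norm, ← Complex.sq_norm, hxz]
  have hconj : starRingEnd ℂ (x + y + z) = 0 := by rw [hsum, map_zero]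
  rw [inv_def, inv_def, inv_def, hy, hz, ← add_mul, ← add_mul, ← map_add, ← map_add, hconj,
    zero_mul]

section CubeEqAddTwo

variable {x y : ℂ} (hx : x ^ 3 = x + 2) (hy : y ^ 3 = y + 2) (hxy : x ≠ y)
include hx hy hxy

lemma sq_add_mul_add_sq_eq_one_of_cube_eq_add_two : x ^ 2 + x * y + y ^ 2 = 1 := by
  have h : (x - y) * (x ^ 2 + x * y + y ^ 2 - 1) = 0 := by linear_combination hx - hy
  linear_combination (mul_eq_zero.mp h).resolve_left (sub_ne_zero_of_ne hxy)

lemma mul_mul_add_eq_neg_two_of_cube_eq_add_two : x * y * (x + y) = -2 := by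
  linear_combination x * sq_add_mul_add_sq_eq_one_of_cube_eq_add_two hx hy hxy - hx

lemma third_root_cube_eq_add_two : (-(x + y)) ^ 3 = -(x + y) + 2 := by
  linear_combination -hx - hy - 3 * mul_mul_add_eq_neg_two_of_cube_eq_add_two hx hy hxy

lemma inv_add_inv_add_inv_third_root : x⁻¹ + y⁻¹ + (-(x + y))⁻¹ = -1 / 2 := by
  have hsq := sq_add_mul_add_sq_eq_one_of_cube_eq_add_two hx hy hxy
  have hprod := mul_mul_add_eq_neg_two_of_cube_eq_add_two hx hy hxy
  have hx0 : x ≠ 0 := by rintro rfl; simp at hprod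
  have hy0 : y ≠ 0 := by rintro rfl; simp at hprod
  have hxy0 : x + y ≠ 0 := by intro h; simp [h] at hprod
  field_simp
  linear_combination 2 * hsq + hprod

lemma pow_ne_pow_of_cube_eq_add_two {n : ℕ} (hn : n ≠ 0) : x ^ n ≠ y ^ n := by
  intro hpow
  have hz := third_root_cube_eq_add_two hx hy hxy
  set z := -(x + y) with hz_def
  obtain ⟨p, q, s, hrep⟩ := exists_pow_eq_of_cube_eq_add_two ℂ n
  have hqs : (q : ℂ) = s * z := by
    have h : (x - y) * (q + s * (x + y)) = 0 := by
      linear_combination hpow - hrep x hx + hrep y hy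
    linear_combination (mul_eq_zero.mp h).resolve_left (sub_ne_zero_of_ne hxy)
  by_cases hs : s = 0
  · have hq : (q : ℂ) = 0 := by simp [hqs, hs]
    have hconst : ∀ w : ℂ, w ^ 3 = w + 2 → w ^ n = p := fun w hw => by
      simp [hrep w hw, hq, hs]
    have hnorm : ∀ v w : ℂ, v ^ 3 = v + 2 → w ^ 3 = w + 2 → ‖v‖ = ‖w‖ := fun v w hv hw =>
      (pow_left_inj₀ (norm_nonneg v) (norm_nonneg w) hn).mp
        (by rw [← norm_pow, ← norm_pow, hconst v hv, hconst w hw])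
    have hzero := Complex.inv_add_inv_add_inv_eq_zero_of_norm_eq
      (hnorm x y hx hy) (hnorm x z hx hz)
      (by rw [hz_def]; ring)
    rw [inv_add_inv_add_inv_third_root hx hy hxy] at hzero
    norm_num at hzero
  · have hzq : z = ((q / s : ℚ) : ℂ) := by
      push_cast
      rw [hqs, mul_div_cancel_left₀ _ (by exact_mod_cast hs)]
    rw [hzq] at hz
    exact Rat.cube_ne_add_two (q / s) (by exact_mod_cast hz)

end CubeEqAddTwo

/-- Let `α₁, α₂, α₃` be the three distinct complex roots of `T³ - T - 2`. For every
positive integer `n`, the numbers `α₁ⁿ + 1`, `α₂ⁿ + 1`, `α₃ⁿ + 1` are pairwise distinct. -/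
theorem stmt_7 (α₁ α₂ α₃ : ℂ)
    (h₁ : α₁ ^ 3 - α₁ - 2 = 0) (h₂ : α₂ ^ 3 - α₂ - 2 = 0) (h₃ : α₃ ^ 3 - α₃ - 2 = 0)
    (h12 : α₁ ≠ α₂) (h13 : α₁ ≠ α₃) (h23 : α₂ ≠ α₃)
    (n : ℕ) (hn : 0 < n) :
    α₁ ^ n + 1 ≠ α₂ ^ n + 1 ∧ α₁ ^ n + 1 ≠ α₃ ^ n + 1 ∧ α₂ ^ n + 1 ≠ α₃ ^ n + 1 := by
  have g₁ : α₁ ^ 3 = α₁ + 2 := by linear_combination h₁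
  have g₂ : α₂ ^ 3 = α₂ + 2 := by linear_combination h₂
  have g₃ : α₃ ^ 3 = α₃ + 2 := by linear_combination h₃
  simp only [ne_eq, add_left_inj]
  exact ⟨pow_ne_pow_of_cube_eq_add_two g₁ g₂ h12 hn.ne',
    pow_ne_pow_of_cube_eq_add_two g₁ g₃ h13 hn.ne',
    pow_ne_pow_of_cube_eq_add_two g₂ g₃ h23 hn.ne'⟩
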